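/- For r₁ = a₁ + c₁u², r₂ = a₂ + c₂u² in Rⁿ (with a_i, c_i ∈ F_pⁿ), if r₁·r₂ = 0 in R then Φ(r₁)·Φ(r₂) = 0 in F_p. -/
import Mathlib

open Polynomial Finset

abbrev Rp (p : ℕ) := AdjoinRoot (X ^ 3 - X : (ZMod p)[X])
noncomputable def uu (p : ℕ) : Rp p := AdjoinRoot.root _
noncomputable def am (p : ℕ) : ZMod p →+* Rp p := algebraMap (ZMod p) (Rp p)

def grayOut (p n : ℕ) (a c : Fin n → ZMod p) : Fin (2 * n) → ZMod p :=
  fun j =>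
    if h : (j : ℕ) < n then - c ⟨j, h⟩
    else 2 * a ⟨(j : ℕ) - n, by have := j.isLt; omega⟩ +
      c ⟨(j : ℕ) - n, by have := j.isLt; omega⟩

lemma indep (p : ℕ) [Fact p.Prime] (x y : ZMod p)
    (h : am p x + am p y * uu p ^ 2 = 0) : x = 0 ∧ y = 0 := by
  have hm : (AdjoinRoot.mk (X ^ 3 - X : (ZMod p)[X])) (C x + C y * X ^ 2) = 0 := by
    simpa [am, uu, AdjoinRoot.algebraMap_eq, map_add, map_mul, map_pow] using h
  rw [AdjoinRoot.mk_eq_zero] at hm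
  have hdeg : (C x + C y * X ^ 2 : (ZMod p)[X]).degree < (X ^ 3 - X : (ZMod p)[X]).degree := by
    have h3 : (X ^ 3 - X : (ZMod p)[X]).degree = 3 := by compute_degree!
    have h2 : (C x + C y * X ^ 2 : (ZMod p)[X]).degree ≤ 2 := by
      apply le_trans (degree_add_le _ _)
      simp only [max_le_iff]
      constructor
      · exact le_trans degree_C_le (by norm_num)
      · exact le_trans (degree_mul_le _ _) (by
          have := degree_C_le (a := y)
          have : (C y * X ^ 2 : (ZMod p)[X]).degree ≤ 0 + 2 :=
            le_trans (degree_mul_le _ _) (add_le_add degree_C_le (by simp [degree_X_pow]))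
          simpa using this)
    rw [h3]; exact lt_of_le_of_lt h2 (by norm_num)
  have h0 : (C x + C y * X ^ 2 : (ZMod p)[X]) = 0 :=
    eq_zero_of_dvd_of_degree_lt hm hdeg
  constructor
  · have := congrArg (fun q : (ZMod p)[X] => q.coeff 0) h0
    simpa [coeff_add, coeff_C, coeff_X_pow] using this
  · have := congrArg (fun q : (ZMod p)[X] => q.coeff 2) h0
    simpa [coeff_add, coeff_C, coeff_X_pow] using this

theorem gray_preserves_orthogonality (p n : ℕ) [Fact p.Prime] (hp : p ≠ 2)
    (a₁ c₁ a₂ c₂ : Fin n → ZMod p)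
    (h : ∑ i, (am p (a₁ i) + am p (c₁ i) * uu p ^ 2) *
              (am p (a₂ i) + am p (c₂ i) * uu p ^ 2) = 0) :
    ∑ j, grayOut p n a₁ c₁ j * grayOut p n a₂ c₂ j = 0 := by
  -- u^4 = u^2
  have hu3 : uu p ^ 3 = uu p := by
    have := AdjoinRoot.mk_self (f := (X ^ 3 - X : (ZMod p)[X]))
    have h' : uu p ^ 3 - uu p = 0 := by
      simpa [uu, map_sub, map_pow, AdjoinRoot.mk_X] using this
    exact sub_eq_zero.mp h'
  have hu4 : uu p ^ 4 = uu p ^ 2 := by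
    have : uu p ^ 4 = uu p ^ 3 * uu p := by ring
    rw [this, hu3]; ring
  -- expand each product term
  have step : ∀ A C A' C' : ZMod p,
      (am p A + am p C * uu p ^ 2) * (am p A' + am p C' * uu p ^ 2) =
      am p (A * A') + am p (A * C' + C * A' + C * C') * uu p ^ 2 := by
    intro A C A' C'
    simp only [map_add, map_mul]
    linear_combination (am p C * am p C') * hu4
  have hsum : am p (∑ i, a₁ i * a₂ i) +
      am p (∑ i, (a₁ i * c₂ i + c₁ i * a₂ i + c₁ i * c₂ i)) * uu p ^ 2 = 0 := by
    rw [map_sum, map_sum, Finset.sum_mul, ← Finset.sum_add_distrib, ← h]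
    exact Finset.sum_congr rfl fun i _ => (step _ _ _ _).symm
  obtain ⟨h1, h2⟩ := indep p _ _ hsum
  -- split the gray sum
  set f : ℕ → ZMod p := fun j =>
    if hj : j < n then c₁ ⟨j, hj⟩ * c₂ ⟨j, hj⟩
    else if hj2 : j - n < n then
      (2 * a₁ ⟨j - n, hj2⟩ + c₁ ⟨j - n, hj2⟩) * (2 * a₂ ⟨j - n, hj2⟩ + c₂ ⟨j - n, hj2⟩)
    else 0 with hf
  have hgray : ∑ j, grayOut p n a₁ c₁ j * grayOut p n a₂ c₂ j = ∑ j : Fin (2 * n), f (j : ℕ) := by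
    refine Finset.sum_congr rfl fun j _ => ?_
    by_cases hj : (j : ℕ) < n
    · simp [grayOut, f, hj]
    · have hj2 : (j : ℕ) - n < n := by have := j.isLt; omega
      simp [grayOut, f, hj, hj2]
  rw [hgray, Fin.sum_univ_eq_sum_range, two_mul, Finset.sum_range_add]
  have e1 : ∑ j ∈ Finset.range n, f j = ∑ i : Fin n, c₁ i * c₂ i := by
    rw [← Fin.sum_univ_eq_sum_range (fun j => f j) n]
    refine Finset.sum_congr rfl fun i _ => ?_
    simp [f, i.isLt]
  have e2 : ∑ j ∈ Finset.range n, f (n + j) =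
      ∑ i : Fin n, (2 * a₁ i + c₁ i) * (2 * a₂ i + c₂ i) := by
    rw [← Fin.sum_univ_eq_sum_range (fun j => f (n + j)) n]
    refine Finset.sum_congr rfl fun i _ => ?_
    have ha : ¬ (n + (i : ℕ) < n) := by omega
    have hb : n + (i : ℕ) - n = (i : ℕ) := by omega
    simp [f, ha, hb, i.isLt]
  rw [e1, e2, ← Finset.sum_add_distrib]
  have : ∑ i : Fin n, (c₁ i * c₂ i + (2 * a₁ i + c₁ i) * (2 * a₂ i + c₂ i)) =
      4 * (∑ i, a₁ i * a₂ i) + 2 * ∑ i, (a₁ i * c₂ i + c₁ i * a₂ i + c₁ i * c₂ i) := by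
    rw [Finset.mul_sum, Finset.mul_sum, ← Finset.sum_add_distrib]
    exact Finset.sum_congr rfl fun i _ => by ring
  rw [this, h1, h2]; ring
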